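/- arXiv:1908.08427 — 2 statements merged into one kernel-verified Lean document; each statement's English description precedes it below -/
import Mathlib

section
/- (Planar Hardy inequality with logarithmic loss) Let 0 < δ < R and let A_{δ,R} = {x ∈ ℝ² : δ < |x| < R}. There is an absolute constant C such that for every f ∈ H¹₀(A_{δ,R}), ∫_{ℝ²} |f(x)|²/|x|² dx ≤ C (log(R/δ))² ‖f‖²_{H¹}. -/
open MeasureTheory

open Real Set


/-- 1D radial Hardy-type estimate with logarithmic loss. -/
lemma oneD_hardy (δ R : ℝ) (hδ : 0 < δ) (hδR : δ < R)
    (h h' k : ℝ → ℝ)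
    (hderiv : ∀ r, HasDerivAt h (h' r) r)
    (hh'c : Continuous h')
    (hkc : Continuous k) (hk0 : ∀ r, 0 ≤ k r)
    (hbound : ∀ r, |h' r| ≤ k r)
    (hvanish : ∀ r, 0 ≤ r → (r ≤ δ ∨ R ≤ r) → h r = 0) :
    ∫ r in Ioi (0:ℝ), (h r)^2 / r ≤
      (Real.log (R/δ))^2 * ∫ r in Ioc δ R, r * (k r)^2 := by
  have hR : 0 < R := hδ.trans hδR
  set L := Real.log (R/δ) with hLdef
  have hL : 0 < L := Real.log_pos (by rw [lt_div_iff₀ hδ]; linarith)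
  set J := ∫ r in Ioc δ R, r * (k r)^2 with hJdef
  have hJmeas : MeasurableSet (Ioc δ R) := measurableSet_Ioc
  have hJint : IntegrableOn (fun r => r * (k r)^2) (Ioc δ R) := by
    exact ((continuous_id.mul (hkc.pow 2)).continuousOn).integrableOn_compact
      isCompact_Icc |>.mono_set Ioc_subset_Icc_self
  have hJ0 : 0 ≤ J := by
    apply setIntegral_nonneg hJmeas
    intro r hr
    have : (0:ℝ) < r := hδ.trans hr.1
    positivity
  -- key pointwise estimate
  have key : ∀ r, δ < r → r ≤ R → (h r)^2 ≤ L * J := by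
    intro r hr1 hr2
    have hr0 : 0 < r := hδ.trans hr1
    -- FTC
    have hRzero : h R = 0 := hvanish R hR.le (Or.inr le_rfl)
    have hFTC : ∫ s in r..R, h' s = h R - h r :=
      intervalIntegral.integral_eq_sub_of_hasDerivAt
        (fun s _ => hderiv s) (hh'c.intervalIntegrable r R)
    have habs : |h r| ≤ ∫ s in r..R, |h' s| := by
      have := intervalIntegral.abs_integral_le_integral_abs (μ := volume) (f := h') (a := r) (b := R) hr2
      rw [hFTC, hRzero] at this
      simpa [abs_sub_comm] using this
    -- for every t > 0
    have sub : ∀ t : ℝ, 0 < t → |h r| ≤ L/(2*t) + t*J/2 := by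
      intro t ht
      have step1 : (∫ s in r..R, |h' s|) ≤
          ∫ s in r..R, (1/(2*t) * (1/s) + t/2 * (s * (k s)^2)) := by
        apply intervalIntegral.integral_mono_on hr2
        · exact (hh'c.abs).intervalIntegrable r R
        · apply ContinuousOn.intervalIntegrable
          apply ContinuousOn.add
          · apply ContinuousOn.mul continuousOn_const
            apply ContinuousOn.div continuousOn_const continuousOn_id
            intro s hs
            rw [uIcc_of_le hr2] at hs
            exact (hr0.trans_le hs.1).ne'
          · exact (continuousOn_const.mul
              ((continuousOn_id.mul ((hkc.continuousOn).pow 2))))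
        · intro s hs
          have hs0 : 0 < s := hr0.trans_le hs.1
          have hks := hk0 s
          have h1 : |h' s| ≤ k s := hbound s
          have h2 : k s ≤ 1/(2*t) * (1/s) + t/2 * (s * (k s)^2) := by
            rw [← sub_nonneg]
            have e : 1/(2*t) * (1/s) + t/2 * (s * (k s)^2) - k s
                = (t*s*(k s) - 1)^2 / (2*t*s) := by
              field_simp
              ring
            rw [e]
            positivity
          linarith
      have step2 : (∫ s in r..R, (1/(2*t) * (1/s) + t/2 * (s * (k s)^2)))
          = 1/(2*t) * Real.log (R/r) + t/2 * ∫ s in r..R, s * (k s)^2 := by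
        rw [intervalIntegral.integral_add, intervalIntegral.integral_const_mul,
          intervalIntegral.integral_const_mul, integral_one_div]
        · intro hmem
          rw [uIcc_of_le hr2] at hmem
          exact absurd hmem.1 (not_le.mpr hr0)
        · apply ContinuousOn.intervalIntegrable
          apply ContinuousOn.mul continuousOn_const
          apply ContinuousOn.div continuousOn_const continuousOn_id
          intro s hs
          rw [uIcc_of_le hr2] at hs
          exact (hr0.trans_le hs.1).ne'
        · apply ContinuousOn.intervalIntegrable
          exact (continuousOn_const.mul ((continuousOn_id.mul ((hkc.continuousOn).pow 2))))
      have step3 : Real.log (R/r) ≤ L := by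
        apply Real.log_le_log (by positivity)
        apply div_le_div_of_nonneg_left hR.le hδ hr1.le
      have step4 : (∫ s in r..R, s * (k s)^2) ≤ J := by
        rw [intervalIntegral.integral_of_le hr2]
        apply setIntegral_mono_set hJint
        · rw [Filter.EventuallyLE, ae_restrict_iff' hJmeas]
          filter_upwards with s hs
          simp only [Pi.zero_apply]
          have : 0 < s := hδ.trans hs.1
          positivity
        · exact HasSubset.Subset.eventuallyLE (Ioc_subset_Ioc_left hr1.le)
      calc |h r| ≤ ∫ s in r..R, |h' s| := habs
        _ ≤ 1/(2*t) * Real.log (R/r) + t/2 * ∫ s in r..R, s * (k s)^2 := by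
            rw [← step2]; exact step1
        _ ≤ 1/(2*t) * L + t/2 * J := by
            apply add_le_add
            · apply mul_le_mul_of_nonneg_left step3 (by positivity)
            · apply mul_le_mul_of_nonneg_left step4 (by positivity)
        _ = L/(2*t) + t*J/2 := by ring
    -- optimize over t
    rcases eq_or_lt_of_le hJ0 with hJz | hJpos
    · have hzero : h r = 0 := by
        have hsmall : ∀ ε : ℝ, 0 < ε → |h r| ≤ ε := by
          intro ε hε
          have := sub (L/(2*ε)) (by positivity)
          rw [← hJz] at this
          calc |h r| ≤ L/(2*(L/(2*ε))) + (L/(2*ε))*0/2 := this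
            _ = ε := by field_simp; ring
        have habs0 : |h r| = 0 := by
          by_contra hne
          have hpos : 0 < |h r| := (abs_nonneg _).lt_of_ne (Ne.symm hne)
          have := hsmall (|h r|/2) (by linarith)
          linarith
        exact abs_eq_zero.mp habs0
      rw [hzero, ← hJz]
      simp
    · set t := Real.sqrt L / Real.sqrt J with htdef
      have hsl : (0:ℝ) < Real.sqrt L := Real.sqrt_pos.mpr hL
      have hsj : (0:ℝ) < Real.sqrt J := Real.sqrt_pos.mpr hJpos
      have ht : 0 < t := div_pos hsl hsj
      have hLL : Real.sqrt L * Real.sqrt L = L := Real.mul_self_sqrt hL.le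
      have hJJ : Real.sqrt J * Real.sqrt J = J := Real.mul_self_sqrt hJpos.le
      have hval : L/(2*t) + t*J/2 = Real.sqrt L * Real.sqrt J := by
        rw [htdef]
        field_simp
        nlinarith [hLL, hJJ]
      have := sub t ht
      rw [hval] at this
      calc (h r)^2 = |h r|^2 := (sq_abs _).symm
        _ ≤ (Real.sqrt L * Real.sqrt J)^2 := by
            apply pow_le_pow_left₀ (abs_nonneg _) this
        _ = L * J := by rw [mul_pow]; rw [Real.sq_sqrt hL.le, Real.sq_sqrt hJpos.le]
  -- now the integral estimate
  have hIoc : ∫ r in Ioi (0:ℝ), (h r)^2 / r = ∫ r in Ioc δ R, (h r)^2 / r := by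
    apply setIntegral_eq_of_subset_of_ae_diff_eq_zero measurableSet_Ioi.nullMeasurableSet
    · intro r hr; exact hδ.trans hr.1
    · filter_upwards with r hr
      obtain ⟨hr0, hrn⟩ := hr
      have : r ≤ δ ∨ R ≤ r := by
        rcases not_and_or.mp hrn with h1 | h1
        · exact Or.inl (le_of_not_gt h1)
        · exact Or.inr (le_of_not_ge h1)
      rw [hvanish r (le_of_lt hr0) this]
      simp
  rw [hIoc]
  have hcont_h : Continuous h := by
    have : Differentiable ℝ h := fun r => (hderiv r).differentiableAt
    exact this.continuous
  have hc1 : ContinuousOn (fun r => (h r)^2 / r) (Icc δ R) := by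
    apply ContinuousOn.div ((hcont_h.continuousOn).pow 2) continuousOn_id
    intro r hr
    exact (hδ.trans_le hr.1).ne'
  have hint1 : IntegrableOn (fun r => (h r)^2 / r) (Ioc δ R) :=
    (hc1.integrableOn_compact isCompact_Icc).mono_set Ioc_subset_Icc_self
  have hc2 : ContinuousOn (fun r : ℝ => (L*J) * (1/r)) (Icc δ R) := by
    apply ContinuousOn.mul continuousOn_const
    apply ContinuousOn.div continuousOn_const continuousOn_id
    intro r hr
    exact (hδ.trans_le hr.1).ne'
  have hint2 : IntegrableOn (fun r : ℝ => (L*J) * (1/r)) (Ioc δ R) :=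
    (hc2.integrableOn_compact isCompact_Icc).mono_set Ioc_subset_Icc_self
  calc ∫ r in Ioc δ R, (h r)^2 / r ≤ ∫ r in Ioc δ R, (L*J) * (1/r) := by
        apply setIntegral_mono_on hint1 hint2 hJmeas
        intro r hr
        have hr0 : 0 < r := hδ.trans hr.1
        rw [mul_one_div]
        gcongr
        · exact key r hr.1 hr.2
    _ = (L*J) * ∫ r in Ioc δ R, (1/r) := by rw [integral_const_mul]
    _ = (L*J) * L := by
        congr 1
        rw [← intervalIntegral.integral_of_le hδR.le, integral_one_div]
        intro hmem
        rw [uIcc_of_le hδR.le] at hmem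
        exact absurd hmem.1 (not_le.mpr hδ)
    _ = L^2 * J := by ring


noncomputable section PlanarHardyAux

namespace PlanarHardyAux

/-- The linear identification of `ℝ × ℝ` with `EuclideanSpace ℝ (Fin 2)`. -/
def Φ : ℝ × ℝ → EuclideanSpace ℝ (Fin 2) :=
  fun p => (PiLp.continuousLinearEquiv 2 ℝ (fun _ : Fin 2 => ℝ)).symm ![p.1, p.2]

lemma Φcont : Continuous Φ := by
  apply (PiLp.continuousLinearEquiv 2 ℝ (fun _ : Fin 2 => ℝ)).symm.continuous.comp
  exact (continuous_pi fun i => by fin_cases i <;> [exact continuous_fst; exact continuous_snd])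

lemma Φsmul (r : ℝ) (p : ℝ × ℝ) : Φ (r • p) = r • Φ p := by
  simp only [Φ, Prod.smul_fst, Prod.smul_snd, smul_eq_mul]
  rw [← _root_.map_smul]
  congr 1
  ext i
  fin_cases i <;> simp

lemma Φnorm (p : ℝ × ℝ) : ‖Φ p‖ = Real.sqrt (p.1^2 + p.2^2) := by
  simp [Φ, EuclideanSpace.norm_eq, Fin.sum_univ_two]

/-- The measurable equivalence of `EuclideanSpace ℝ (Fin 2)` with `ℝ × ℝ`. -/
def φe : EuclideanSpace ℝ (Fin 2) ≃ᵐ ℝ × ℝ :=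
  (MeasurableEquiv.toLp 2 (Fin 2 → ℝ)).symm.trans MeasurableEquiv.finTwoArrow

lemma φesymm (p : ℝ × ℝ) : φe.symm p = Φ p := rfl

lemma φemp : MeasurePreserving φe :=
  (volume_preserving_finTwoArrow ℝ).comp
    (EuclideanSpace.volume_preserving_symm_measurableEquiv_toLp (Fin 2))

/-- The unit vector in direction `θ`. -/
def uvec (θ : ℝ) : EuclideanSpace ℝ (Fin 2) := Φ (Real.cos θ, Real.sin θ)

lemma uvec_cont : Continuous uvec :=
  Φcont.comp (continuous_cos.prodMk continuous_sin)

lemma unorm (θ : ℝ) : ‖uvec θ‖ = 1 := by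
  rw [uvec, Φnorm]
  simp [Real.cos_sq_add_sin_sq]

lemma norm_smul_uvec (r θ : ℝ) : ‖r • uvec θ‖ = |r| := by
  rw [norm_smul, unorm, Real.norm_eq_abs, mul_one]

/-- Full-plane-to-polar transfer of integrals. -/
lemma transfer (G : EuclideanSpace ℝ (Fin 2) → ℝ) :
    ∫ x, G x = ∫ q in (Ioo (-π) π) ×ˢ (Ioi (0:ℝ)), q.2 * G (q.2 • uvec q.1) := by
  have h1 : ∫ x, G x = ∫ p : ℝ × ℝ, G (Φ p) := by
    rw [← (φemp.symm φe).integral_comp φe.symm.measurableEmbedding G]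
    simp only [φesymm]
  have h2 : ∫ p : ℝ × ℝ, G (Φ p) =
      ∫ p in polarCoord.target, p.1 * G (p.1 • uvec p.2) := by
    rw [← integral_comp_polarCoord_symm (fun p => G (Φ p))]
    apply setIntegral_congr_fun polarCoord.open_target.measurableSet
    intro p hp
    have hps : polarCoord.symm p = p.1 • ((Real.cos p.2, Real.sin p.2) : ℝ × ℝ) := by
      simp [polarCoord, Prod.smul_mk, smul_eq_mul]
    show p.1 • G (Φ (polarCoord.symm p)) = p.1 * G (p.1 • uvec p.2)
    rw [hps, Φsmul]
    simp [uvec, smul_eq_mul]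
  have h3 : ∫ p in polarCoord.target, p.1 * G (p.1 • uvec p.2) =
      ∫ q in (Ioo (-π) π) ×ˢ (Ioi (0:ℝ)), q.2 * G (q.2 • uvec q.1) := by
    have hswap : MeasurePreserving (Prod.swap : ℝ × ℝ → ℝ × ℝ) volume volume :=
      Measure.measurePreserving_swap
    have hpre : (Prod.swap : ℝ × ℝ → ℝ × ℝ) ⁻¹' polarCoord.target
        = (Ioo (-π) π) ×ˢ (Ioi (0:ℝ)) := by
      have htar : polarCoord.target = Ioi (0:ℝ) ×ˢ Ioo (-π) π := rfl
      rw [htar]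
      ext q
      simp [Prod.swap, and_comm]
    rw [← hswap.setIntegral_preimage_emb MeasurableEquiv.prodComm.measurableEmbedding
      (fun p => p.1 * G (p.1 • uvec p.2)) polarCoord.target, hpre]
    rfl
  rw [h1, h2, h3]

/-- Integrability of the polar integrand for continuous compactly supported data. -/
lemma psi_integrable (R : ℝ) (G : EuclideanSpace ℝ (Fin 2) → ℝ)
    (hGc : Continuous G) (hG0 : ∀ x, R ≤ ‖x‖ → G x = 0) :
    IntegrableOn (fun q : ℝ × ℝ => q.2 * G (q.2 • uvec q.1))
      ((Ioo (-π) π) ×ˢ (Ioi (0:ℝ))) := by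
  set Ψ : ℝ × ℝ → ℝ := fun q => q.2 * G (q.2 • uvec q.1) with hΨ
  have hΨc : Continuous Ψ := by
    apply continuous_snd.mul
    exact hGc.comp (continuous_snd.smul (uvec_cont.comp continuous_fst))
  set S := (Ioo (-π) π) ×ˢ (Ioi (0:ℝ)) with hS
  set K := (Icc (-π) π) ×ˢ (Icc (0:ℝ) R) with hK
  have hSmeas : MeasurableSet S := (measurableSet_Ioo.prod measurableSet_Ioi)
  have hKmeas : MeasurableSet K := (measurableSet_Icc.prod measurableSet_Icc)
  have hIK : IntegrableOn Ψ K :=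
    hΨc.continuousOn.integrableOn_compact (isCompact_Icc.prod isCompact_Icc)
  have h1 : IntegrableOn Ψ (S ∩ K) := hIK.mono_set inter_subset_right
  have h2 : IntegrableOn Ψ (S \ K) := by
    have hz : EqOn (fun _ => (0:ℝ)) Ψ (S \ K) := by
      intro q hq
      obtain ⟨⟨hθ, hr⟩, hnk⟩ := hq
      have hr0 : 0 < q.2 := hr
      have : ¬ (q.2 ∈ Icc (0:ℝ) R) := by
        intro hmem
        exact hnk ⟨⟨hθ.1.le, hθ.2.le⟩, hmem⟩
      have hrR : R < q.2 := by
        by_contra hle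
        exact this ⟨hr0.le, not_lt.mp hle⟩
      have : G (q.2 • uvec q.1) = 0 := by
        apply hG0
        rw [norm_smul_uvec, abs_of_pos hr0]
        exact hrR.le
      simp [hΨ, this]
    exact (integrableOn_zero (ε' := ℝ)).congr_fun hz (hSmeas.diff hKmeas)
  have : IntegrableOn Ψ ((S ∩ K) ∪ (S \ K)) := h1.union h2
  rwa [inter_union_diff] at this

end PlanarHardyAux

end PlanarHardyAux

/-- Planar Hardy inequality with logarithmic loss: there is an absolute constant `C`
such that for `0 < δ < R` and every `f ∈ H¹₀(A_{δ,R})`, where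
`A_{δ,R} = {x ∈ ℝ² : δ < |x| < R}`,
`∫ |f|²/|x|² ≤ C (log (R/δ))² ‖f‖²_{H¹}`. -/
theorem planar_hardy_inequality :
    ∃ C > 0, ∀ δ R : ℝ, 0 < δ → δ < R →
      ∀ f : EuclideanSpace ℝ (Fin 2) → ℝ,
        ContDiff ℝ 1 f → HasCompactSupport f →
        tsupport f ⊆ {x : EuclideanSpace ℝ (Fin 2) | δ < ‖x‖ ∧ ‖x‖ < R} →
        ∫ x : EuclideanSpace ℝ (Fin 2), (f x) ^ 2 / ‖x‖ ^ 2 ≤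
          C * (Real.log (R / δ)) ^ 2 *
            ((∫ x : EuclideanSpace ℝ (Fin 2), (f x) ^ 2) +
             ∫ x : EuclideanSpace ℝ (Fin 2), ‖fderiv ℝ f x‖ ^ 2) := by
  refine ⟨1, one_pos, ?_⟩
  intro δ R hδ hδR f hf hfcs hsupp
  have hR : 0 < R := hδ.trans hδR
  set L := Real.log (R/δ) with hLdef
  have hLpos : 0 < L := Real.log_pos (by rw [lt_div_iff₀ hδ]; linarith)
  have hfcont : Continuous f := hf.continuous
  have hDcont : Continuous (fderiv ℝ f) := hf.continuous_fderiv one_ne_zero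
  have hfz : ∀ x : EuclideanSpace ℝ (Fin 2), (‖x‖ ≤ δ ∨ R ≤ ‖x‖) → f x = 0 := by
    intro x hx
    by_contra hne
    have hmem := hsupp (subset_tsupport f hne)
    rcases hx with h | h
    · exact absurd hmem.1 (not_lt.mpr h)
    · exact absurd hmem.2 (not_lt.mpr h)
  have hdz : ∀ x : EuclideanSpace ℝ (Fin 2), R ≤ ‖x‖ → fderiv ℝ f x = 0 := by
    intro x hx
    apply image_eq_zero_of_notMem_tsupport
    intro hmem
    exact absurd (hsupp (tsupport_fderiv_subset ℝ hmem)).2 (not_lt.mpr hx)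
  set G1 : EuclideanSpace ℝ (Fin 2) → ℝ := fun x => f x ^ 2 / ‖x‖ ^ 2 with hG1def
  set G3 : EuclideanSpace ℝ (Fin 2) → ℝ := fun x => ‖fderiv ℝ f x‖ ^ 2 with hG3def
  have hG1z : ∀ x, R ≤ ‖x‖ → G1 x = 0 := fun x hx => by
    simp [hG1def, hfz x (Or.inr hx)]
  have hG3z : ∀ x, R ≤ ‖x‖ → G3 x = 0 := fun x hx => by
    simp [hG3def, hdz x hx]
  have hG1c : Continuous G1 := by
    rw [continuous_iff_continuousAt]
    intro x
    rcases eq_or_ne x 0 with rfl | hx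
    · have hball : Metric.ball (0 : EuclideanSpace ℝ (Fin 2)) δ
          ∈ nhds (0 : EuclideanSpace ℝ (Fin 2)) := Metric.ball_mem_nhds _ hδ
      have hev : (fun _ => (0:ℝ)) =ᶠ[nhds (0 : EuclideanSpace ℝ (Fin 2))] G1 := by
        filter_upwards [hball] with y hy
        rw [Metric.mem_ball, dist_zero_right] at hy
        simp [hG1def, hfz y (Or.inl hy.le)]
      exact continuousAt_const.congr hev
    · apply ContinuousAt.div ((hfcont.continuousAt).pow 2)
        ((continuous_norm.continuousAt).pow 2)
      exact pow_ne_zero 2 (norm_ne_zero_iff.mpr hx)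
  have hG3c : Continuous G3 := (hDcont.norm).pow 2
  have hint1 := PlanarHardyAux.psi_integrable R G1 hG1c hG1z
  have hint3 := PlanarHardyAux.psi_integrable R G3 hG3c hG3z
  have fub1 : ∫ q in (Ioo (-π) π) ×ˢ (Ioi (0:ℝ)), q.2 * G1 (q.2 • PlanarHardyAux.uvec q.1)
      = ∫ θ in Ioo (-π) π, ∫ r in Ioi (0:ℝ), r * G1 (r • PlanarHardyAux.uvec θ) :=
    setIntegral_prod _ hint1
  have fub3 : ∫ q in (Ioo (-π) π) ×ˢ (Ioi (0:ℝ)), q.2 * G3 (q.2 • PlanarHardyAux.uvec q.1)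
      = ∫ θ in Ioo (-π) π, ∫ r in Ioi (0:ℝ), r * G3 (r • PlanarHardyAux.uvec θ) :=
    setIntegral_prod _ hint3
  have hprod1 : Integrable (fun q : ℝ × ℝ => q.2 * G1 (q.2 • PlanarHardyAux.uvec q.1))
      (((volume : Measure ℝ).restrict (Ioo (-π) π)).prod
        ((volume : Measure ℝ).restrict (Ioi (0:ℝ)))) := by
    rw [Measure.prod_restrict]; exact hint1
  have hprod3 : Integrable (fun q : ℝ × ℝ => q.2 * G3 (q.2 • PlanarHardyAux.uvec q.1))
      (((volume : Measure ℝ).restrict (Ioo (-π) π)).prod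
        ((volume : Measure ℝ).restrict (Ioi (0:ℝ)))) := by
    rw [Measure.prod_restrict]; exact hint3
  have hmarg1 : Integrable (fun θ => ∫ r in Ioi (0:ℝ), r * G1 (r • PlanarHardyAux.uvec θ))
      ((volume : Measure ℝ).restrict (Ioo (-π) π)) := hprod1.integral_prod_left
  have hmarg3 : Integrable (fun θ => ∫ r in Ioi (0:ℝ), r * G3 (r • PlanarHardyAux.uvec θ))
      ((volume : Measure ℝ).restrict (Ioo (-π) π)) := hprod3.integral_prod_left
  have hsec3 : ∀ᵐ θ ∂((volume : Measure ℝ).restrict (Ioo (-π) π)),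
      IntegrableOn (fun r => r * G3 (r • PlanarHardyAux.uvec θ)) (Ioi (0:ℝ)) :=
    hprod3.prod_right_ae
  -- per θ estimate
  have perθ : ∀ θ : ℝ, IntegrableOn (fun r => r * G3 (r • PlanarHardyAux.uvec θ)) (Ioi (0:ℝ)) →
      (∫ r in Ioi (0:ℝ), r * G1 (r • PlanarHardyAux.uvec θ)) ≤
        L^2 * ∫ r in Ioi (0:ℝ), r * G3 (r • PlanarHardyAux.uvec θ) := by
    intro θ hsec
    set u := PlanarHardyAux.uvec θ with hu
    set h : ℝ → ℝ := fun r => f (r • u) with hh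
    set h' : ℝ → ℝ := fun r => (fderiv ℝ f (r • u)) u with hh'
    set k : ℝ → ℝ := fun r => ‖fderiv ℝ f (r • u)‖ with hk
    have hcurve : Continuous (fun r : ℝ => r • u) := continuous_id.smul continuous_const
    have hderiv : ∀ r : ℝ, HasDerivAt h (h' r) r := by
      intro r
      have h1 : HasDerivAt (fun r : ℝ => r • u) u r := by
        simpa using (hasDerivAt_id r).smul_const u
      exact ((hf.differentiable one_ne_zero (r • u)).hasFDerivAt).comp_hasDerivAt r h1
    have hh'c : Continuous h' := (hDcont.comp hcurve).clm_apply continuous_const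
    have hkc : Continuous k := (hDcont.comp hcurve).norm
    have hk0 : ∀ r, 0 ≤ k r := fun r => norm_nonneg _
    have hbound : ∀ r, |h' r| ≤ k r := by
      intro r
      calc |h' r| = ‖(fderiv ℝ f (r • u)) u‖ := (Real.norm_eq_abs _).symm
        _ ≤ ‖fderiv ℝ f (r • u)‖ * ‖u‖ := (fderiv ℝ f (r • u)).le_opNorm u
        _ = k r := by rw [hu, PlanarHardyAux.unorm, mul_one, hk]
    have hvan : ∀ r : ℝ, 0 ≤ r → (r ≤ δ ∨ R ≤ r) → h r = 0 := by
      intro r hr0 hcase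
      apply hfz
      rw [hu, PlanarHardyAux.norm_smul_uvec, abs_of_nonneg hr0]
      exact hcase
    have main := oneD_hardy δ R hδ hδR h h' k hderiv hh'c hkc hk0 hbound hvan
    have lhseq : ∫ r in Ioi (0:ℝ), r * G1 (r • u) = ∫ r in Ioi (0:ℝ), (h r)^2 / r := by
      apply setIntegral_congr_fun measurableSet_Ioi
      intro r hr
      have hr0 : (0:ℝ) < r := hr
      have hnrm : ‖r • u‖ = r := by
        rw [hu, PlanarHardyAux.norm_smul_uvec, abs_of_pos hr0]
      simp only [hG1def, hh, hnrm]
      field_simp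
    have hmono : (∫ r in Ioc δ R, r * (k r)^2) ≤
        ∫ r in Ioi (0:ℝ), r * G3 (r • u) := by
      have heq : (∫ r in Ioc δ R, r * (k r)^2) = ∫ r in Ioc δ R, r * G3 (r • u) := by
        apply setIntegral_congr_fun measurableSet_Ioc
        intro r hr
        simp [hk, hG3def]
      rw [heq]
      apply setIntegral_mono_set hsec
      · rw [Filter.EventuallyLE, ae_restrict_iff' measurableSet_Ioi]
        filter_upwards with r hr
        simp only [Pi.zero_apply]
        have hr0 : (0:ℝ) < r := hr
        have := sq_nonneg (G3 (r • u))
        have hg3 : 0 ≤ G3 (r • u) := by rw [hG3def]; positivity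
        positivity
      · exact HasSubset.Subset.eventuallyLE (fun r hr => hδ.trans hr.1)
    calc ∫ r in Ioi (0:ℝ), r * G1 (r • u) = ∫ r in Ioi (0:ℝ), (h r)^2 / r := lhseq
      _ ≤ L^2 * ∫ r in Ioc δ R, r * (k r)^2 := main
      _ ≤ L^2 * ∫ r in Ioi (0:ℝ), r * G3 (r • u) := by
          apply mul_le_mul_of_nonneg_left hmono (sq_nonneg L)
  have hA : 0 ≤ ∫ x : EuclideanSpace ℝ (Fin 2), f x ^ 2 :=
    integral_nonneg (fun x => sq_nonneg _)
  calc ∫ x, G1 x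
      = ∫ θ in Ioo (-π) π, ∫ r in Ioi (0:ℝ), r * G1 (r • PlanarHardyAux.uvec θ) := by
        rw [PlanarHardyAux.transfer G1, fub1]
    _ ≤ ∫ θ in Ioo (-π) π, L^2 * ∫ r in Ioi (0:ℝ), r * G3 (r • PlanarHardyAux.uvec θ) := by
        apply integral_mono_ae hmarg1 (hmarg3.const_mul _)
        filter_upwards [hsec3] with θ hθ
        exact perθ θ hθ
    _ = L^2 * ∫ θ in Ioo (-π) π, ∫ r in Ioi (0:ℝ), r * G3 (r • PlanarHardyAux.uvec θ) :=
        integral_const_mul _ _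
    _ = L^2 * ∫ x, G3 x := by rw [PlanarHardyAux.transfer G3, fub3]
    _ ≤ 1 * L^2 * ((∫ x : EuclideanSpace ℝ (Fin 2), f x ^ 2) + ∫ x, G3 x) := by
        have hB : 0 ≤ L^2 * (∫ x : EuclideanSpace ℝ (Fin 2), f x ^ 2) :=
          mul_nonneg (sq_nonneg L) hA
        nlinarith
end

section
/- (Convergence of the normalization constant c_{0,h} for C¹ boundaries) Let ψ : ℝ^{n-1} → ℝ be C¹ with ψ(0) = 0, ∇ψ(0) = 0, let Ω locally agree with the epigraph {x_n > ψ(x')} near 0, and let u_1(x) = (x_n + 1)/|x + e_n|^n. Then ∫_{h^{-1}Ω} |∇u_1|² → ∫_{H_+} |∇u_1|² as h → 0, where H_+ = {x_n > 0}. -/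
set_option synthInstance.maxHeartbeats 1000000
set_option maxHeartbeats 1000000
set_option linter.unreachableTactic false
set_option linter.unusedTactic false


open MeasureTheory Metric Filter Topology

/-- The singular solution `u₁(x) = (x_n + 1) / |x + e_n|^n` on `ℝ^{m+1}`. -/
noncomputable def uOne (m : ℕ) (x : EuclideanSpace ℝ (Fin (m + 1))) : ℝ :=
  (x (Fin.last m) + 1) /
    ‖x + EuclideanSpace.single (Fin.last m) 1‖ ^ (m + 1)

lemma coord_abs_le_norm {n : ℕ} (x : EuclideanSpace ℝ (Fin n)) (i : Fin n) : |x i| ≤ ‖x‖ := by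
  rw [EuclideanSpace.norm_eq, ← Real.sqrt_sq_eq_abs]
  apply Real.sqrt_le_sqrt
  simpa [Real.norm_eq_abs, sq_abs] using
    Finset.single_le_sum (f := fun j => (x j) ^ 2) (fun j _ => sq_nonneg _) (Finset.mem_univ i)

lemma trunc_norm_le {m : ℕ} (x : EuclideanSpace ℝ (Fin (m + 1)))
    (x' : EuclideanSpace ℝ (Fin m)) (hx' : ∀ i, x' i = x (Fin.castSucc i)) : ‖x'‖ ≤ ‖x‖ := by
  rw [EuclideanSpace.norm_eq, EuclideanSpace.norm_eq]
  apply Real.sqrt_le_sqrt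
  rw [Fin.sum_univ_castSucc (f := fun j => ‖x j‖ ^ 2)]
  have h : (0:ℝ) ≤ ‖x (Fin.last m)‖ ^ 2 := sq_nonneg _
  have h2 : ∑ i : Fin m, ‖x' i‖ ^ 2 = ∑ i : Fin m, ‖x (Fin.castSucc i)‖ ^ 2 := by
    simp [hx']
  linarith

lemma rpow_key (m : ℕ) {a : ℝ} (ha : 0 < a) :
    ((a ^ 2 : ℝ) ^ (-((m:ℝ)+1)/2)) = (a ^ (m+1) : ℝ)⁻¹ := by
  rw [← Real.rpow_natCast a 2, ← Real.rpow_mul ha.le]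
  have h2 : ((2:ℕ):ℝ) * (-((m:ℝ)+1)/2) = -((m:ℝ)+1) := by push_cast; ring
  rw [h2, Real.rpow_neg ha.le, ← Real.rpow_natCast a (m+1)]
  push_cast
  ring_nf

lemma uOne_eq (m : ℕ) :
    uOne m = fun x => (x (Fin.last m) + 1) *
      ((‖x + EuclideanSpace.single (Fin.last m) 1‖ ^ 2 : ℝ) ^ (-((m:ℝ)+1)/2)) := by
  funext x
  set y := x + EuclideanSpace.single (Fin.last m) 1 with hy
  rcases eq_or_ne ‖y‖ 0 with h0 | h0
  · have hr : (-((m:ℝ)+1)/2) ≠ 0 := by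
      have : (0:ℝ) < (m:ℝ) + 1 := by positivity
      intro h; rw [div_eq_zero_iff] at h
      rcases h with h | h <;> linarith
    rw [uOne, ← hy, h0]
    rw [show ((0:ℝ)^2 : ℝ) = 0 by ring, Real.zero_rpow hr]
    simp [zero_pow]
  · have hpos : 0 < ‖y‖ := lt_of_le_of_ne (norm_nonneg _) (Ne.symm h0)
    rw [uOne, ← hy, rpow_key m hpos, div_eq_mul_inv]

lemma uOne_fderiv_norm_le (m : ℕ) (x : EuclideanSpace ℝ (Fin (m + 1)))
    (hx : ‖x + EuclideanSpace.single (Fin.last m) 1‖ ≠ 0) :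
    ‖fderiv ℝ (uOne m) x‖ ≤
      ((m:ℝ)+2) * ‖x + EuclideanSpace.single (Fin.last m) 1‖ ^ (-((m:ℝ)+1)) := by
  set e : EuclideanSpace ℝ (Fin (m + 1)) := EuclideanSpace.single (Fin.last m) 1 with he
  set y : EuclideanSpace ℝ (Fin (m + 1)) := x + e with hy
  set r : ℝ := -((m:ℝ)+1)/2 with hr
  have hny : 0 < ‖y‖ := lt_of_le_of_ne (norm_nonneg _) (Ne.symm hx)
  set q : ℝ := ‖y‖ ^ 2 with hq
  have hqpos : 0 < q := by positivity
  set P : EuclideanSpace ℝ (Fin (m + 1)) →L[ℝ] ℝ := EuclideanSpace.proj (Fin.last m) with hP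
  -- derivative of the first factor
  have hg₁ : HasFDerivAt (fun x : EuclideanSpace ℝ (Fin (m + 1)) => x (Fin.last m) + 1) P x :=
    P.hasFDerivAt.add_const 1
  -- derivative of ‖x + e‖ ^ 2
  have hnorm : HasFDerivAt (fun x : EuclideanSpace ℝ (Fin (m + 1)) => ‖x + e‖ ^ 2)
      (2 • (innerSL ℝ y)) x := by
    have h1 : HasFDerivAt (fun x : EuclideanSpace ℝ (Fin (m + 1)) => x + e)
        (ContinuousLinearMap.id ℝ _) x := (hasFDerivAt_id x).add_const e
    have h2 := h1.norm_sq
    rw [hy]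
    simpa using h2
  have hg₂ : HasFDerivAt
      (fun x : EuclideanSpace ℝ (Fin (m + 1)) => ((‖x + e‖ ^ 2 : ℝ) ^ r))
      ((r * q ^ (r - 1)) • (2 • (innerSL ℝ y))) x :=
    hnorm.rpow_const (Or.inl hqpos.ne')
  have hD : HasFDerivAt (uOne m)
      ((x (Fin.last m) + 1) • ((r * q ^ (r - 1)) • (2 • (innerSL ℝ y))) + (q ^ r) • P) x := by
    rw [uOne_eq m]
    exact hg₁.mul hg₂
  rw [hD.fderiv]
  have habs_r : |r| = ((m:ℝ)+1)/2 := by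
    rw [hr, abs_div, abs_neg, abs_of_nonneg (by positivity : (0:ℝ) ≤ (m:ℝ)+1)]
    norm_num
  have hqr1 : q ^ (r - 1) * q = q ^ r := by
    rw [Real.rpow_sub_one hqpos.ne']
    field_simp
  have hqr : q ^ r = ‖y‖ ^ (-((m:ℝ)+1)) := by
    rw [hq, ← Real.rpow_natCast ‖y‖ 2, ← Real.rpow_mul hny.le, hr]
    congr 1
    push_cast
    ring
  have hqr_pos : (0:ℝ) < q ^ r := Real.rpow_pos_of_pos hqpos _
  have hqr1_pos : (0:ℝ) < q ^ (r - 1) := Real.rpow_pos_of_pos hqpos _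
  refine ContinuousLinearMap.opNorm_le_bound _ (by positivity) fun v => ?_
  have hPv : |P v| ≤ ‖v‖ := by
    simpa [hP, Real.norm_eq_abs] using coord_abs_le_norm v (Fin.last m)
  have hiv : |(inner ℝ y v : ℝ)| ≤ ‖y‖ * ‖v‖ := abs_real_inner_le_norm y v
  have happ : ((x (Fin.last m) + 1) • (r * q ^ (r - 1)) • 2 • (innerSL ℝ) y + q ^ r • P) v =
      (x (Fin.last m) + 1) * (r * q ^ (r - 1) * (2 * (inner ℝ y v : ℝ))) + q ^ r * (P v) := by
    simp [ContinuousLinearMap.add_apply, ContinuousLinearMap.smul_apply, smul_eq_mul,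
      innerSL_apply_apply] <;> ring
  rw [Real.norm_eq_abs, happ]
  have hxl : |x (Fin.last m) + 1| ≤ ‖y‖ := by
    have h1 : y (Fin.last m) = x (Fin.last m) + 1 := by
      simp [hy, he, PiLp.add_apply, EuclideanSpace.single_apply]
    calc |x (Fin.last m) + 1| = |y (Fin.last m)| := by rw [h1]
      _ ≤ ‖y‖ := coord_abs_le_norm y _
  have e1 : |(x (Fin.last m) + 1) * (r * q ^ (r - 1) * (2 * (inner ℝ y v : ℝ)))| ≤
      ((m:ℝ)+1) * q ^ r * ‖v‖ := by
    calc |(x (Fin.last m) + 1) * (r * q ^ (r - 1) * (2 * (inner ℝ y v : ℝ)))|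
        = |x (Fin.last m) + 1| * (|r| * q ^ (r - 1) * (2 * |(inner ℝ y v : ℝ)|)) := by
          rw [abs_mul, abs_mul, abs_mul, abs_of_pos hqr1_pos, abs_mul,
            abs_of_nonneg (by norm_num : (0:ℝ) ≤ 2)]
      _ ≤ ‖y‖ * (((m:ℝ)+1)/2 * q ^ (r - 1) * (2 * (‖y‖ * ‖v‖))) := by
          rw [habs_r]
          gcongr
      _ = ((m:ℝ)+1) * (q ^ (r - 1) * q) * ‖v‖ := by rw [hq]; ring
      _ = ((m:ℝ)+1) * q ^ r * ‖v‖ := by rw [hqr1]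
  have e2 : |q ^ r * P v| ≤ q ^ r * ‖v‖ := by
    rw [abs_mul, abs_of_pos hqr_pos]
    exact mul_le_mul_of_nonneg_left hPv hqr_pos.le
  calc |(x (Fin.last m) + 1) * (r * q ^ (r - 1) * (2 * (inner ℝ y v : ℝ))) + q ^ r * (P v)|
      ≤ |(x (Fin.last m) + 1) * (r * q ^ (r - 1) * (2 * (inner ℝ y v : ℝ)))| + |q ^ r * P v| :=
        abs_add_le _ _
    _ ≤ ((m:ℝ)+1) * q ^ r * ‖v‖ + q ^ r * ‖v‖ := add_le_add e1 e2
    _ = ((m:ℝ)+2) * q ^ r * ‖v‖ := by ring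
    _ = ((m:ℝ)+2) * ‖y‖ ^ (-((m:ℝ)+1)) * ‖v‖ := by rw [hqr]


/-- Convergence of the normalization constant `c_{0,h}` for `C¹` boundaries: if `ψ` is
`C¹` with `ψ(0) = 0`, `∇ψ(0) = 0`, and `Ω` agrees near `0` with the epigraph
`{x_n > ψ(x')}`, then `∫_{h^{-1}Ω} |∇u₁|² → ∫_{H_+} |∇u₁|²` as `h → 0⁺`. -/
theorem c0h_convergence (m : ℕ)
    (ψ : EuclideanSpace ℝ (Fin m) → ℝ) (hψ : ContDiff ℝ 1 ψ)
    (hψ0 : ψ 0 = 0) (hdψ0 : fderiv ℝ ψ 0 = 0)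
    (Ω : Set (EuclideanSpace ℝ (Fin (m + 1)))) (hΩmeas : MeasurableSet Ω)
    (δ : ℝ) (hδ : 0 < δ)
    (hloc : Ω ∩ Metric.ball 0 δ =
      {x : EuclideanSpace ℝ (Fin (m + 1)) |
        ψ (WithLp.toLp 2 (fun i => x (Fin.castSucc i)) : EuclideanSpace ℝ (Fin m)) <
          x (Fin.last m)} ∩ Metric.ball 0 δ) :
    Tendsto
      (fun h : ℝ =>
        ∫ x in (fun x : EuclideanSpace ℝ (Fin (m + 1)) => h • x) ⁻¹' Ω,
          ‖fderiv ℝ (uOne m) x‖ ^ 2)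
      (nhdsWithin 0 (Set.Ioi 0))
      (nhds (∫ x in {x : EuclideanSpace ℝ (Fin (m + 1)) | 0 < x (Fin.last m)},
        ‖fderiv ℝ (uOne m) x‖ ^ 2)) := by

  classical
  set e : (EuclideanSpace ℝ (Fin (m + 1))) := EuclideanSpace.single (Fin.last m) 1 with he
  set g : (EuclideanSpace ℝ (Fin (m + 1))) → ℝ := fun x => ‖fderiv ℝ (uOne m) x‖ ^ 2 with hg
  have hgnonneg : ∀ x, 0 ≤ g x := fun x => by positivity
  have hgmeas : Measurable g := ((measurable_fderiv ℝ (uOne m)).norm).pow_const 2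
  have hpre : ∀ h : ℝ, MeasurableSet ((fun x : (EuclideanSpace ℝ (Fin (m + 1))) => h • x) ⁻¹' Ω) := fun h =>
    hΩmeas.preimage (continuous_const_smul h).measurable
  have hH : MeasurableSet {x : (EuclideanSpace ℝ (Fin (m + 1))) | 0 < x (Fin.last m)} := by
    have hc : Continuous fun x : (EuclideanSpace ℝ (Fin (m + 1))) => x (Fin.last m) :=
      (EuclideanSpace.proj (Fin.last m)).continuous
    exact measurableSet_lt measurable_const hc.measurable
  -- rewrite set integrals as integrals of indicators
  have hint1 : ∀ h : ℝ, ∫ x in (fun x : (EuclideanSpace ℝ (Fin (m + 1))) => h • x) ⁻¹' Ω, g x =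
      ∫ x, Set.indicator ((fun x : (EuclideanSpace ℝ (Fin (m + 1))) => h • x) ⁻¹' Ω) g x :=
    fun h => (integral_indicator (hpre h)).symm
  have hint2 : ∫ x in {x : (EuclideanSpace ℝ (Fin (m + 1))) | 0 < x (Fin.last m)}, g x =
      ∫ x, Set.indicator {x : (EuclideanSpace ℝ (Fin (m + 1))) | 0 < x (Fin.last m)} g x := (integral_indicator hH).symm
  simp only [hg] at hint1 hint2
  rw [show (fun h : ℝ => ∫ x in (fun x : (EuclideanSpace ℝ (Fin (m + 1))) => h • x) ⁻¹' Ω, ‖fderiv ℝ (uOne m) x‖ ^ 2)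
      = fun h : ℝ => ∫ x, Set.indicator ((fun x : (EuclideanSpace ℝ (Fin (m + 1))) => h • x) ⁻¹' Ω) g x from funext hint1,
    hint2]
  -- the little-o property of ψ at 0
  have hdiff : HasFDerivAt ψ (0 : EuclideanSpace ℝ (Fin m) →L[ℝ] ℝ) 0 := by
    have h1 := (hψ.differentiable one_ne_zero 0).hasFDerivAt
    rwa [hdψ0] at h1
  have hlo : (fun z => ψ z) =o[nhds (0 : EuclideanSpace ℝ (Fin m))] fun z => z := by
    have h2 := hasFDerivAt_iff_isLittleO_nhds_zero.mp hdiff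
    simpa [hψ0] using h2
  obtain ⟨ρ, hρpos, hρ⟩ : ∃ ρ > 0, ∀ z : EuclideanSpace ℝ (Fin m), dist z 0 < ρ →
      ‖ψ z‖ ≤ 1/4 * ‖z‖ := by
    have h3 := hlo.def (by norm_num : (0:ℝ) < 1/4)
    rw [Metric.eventually_nhds_iff] at h3
    obtain ⟨ρ, hρpos, hball⟩ := h3
    exact ⟨ρ, hρpos, fun z hz => hball hz⟩
  -- the dominating function
  set s : ℝ := 2*(m:ℝ)+2 with hs
  have hs_pos : (0:ℝ) < s := by rw [hs]; positivity
  set C : ℝ := ((m:ℝ)+2)^2 * 3 ^ s with hC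
  have hC_pos : 0 < C := by rw [hC]; positivity
  set bound : (EuclideanSpace ℝ (Fin (m + 1))) → ℝ := fun x => C * (1 + ‖x + e‖) ^ (-s) with hbound
  have bound_nonneg : ∀ x, 0 ≤ bound x := fun x => by
    rw [hbound]
    have : (0:ℝ) < 1 + ‖x + e‖ := by positivity
    positivity
  have bound_integrable : Integrable bound := by
    have h0 : Integrable (fun x : (EuclideanSpace ℝ (Fin (m + 1))) => (1 + ‖x‖) ^ (-s)) := by
      apply integrable_one_add_norm
      rw [finrank_euclideanSpace_fin, hs]
      push_cast
      linarith
    exact (h0.comp_add_right e).const_mul C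
  -- key upper bound for g outside the unit ball around -e
  have key_bound : ∀ x : (EuclideanSpace ℝ (Fin (m + 1))), (1:ℝ)/2 ≤ ‖x + e‖ → g x ≤ bound x := by
    intro x hhalf
    have htpos : (0:ℝ) < ‖x + e‖ := by linarith
    have hub := uOne_fderiv_norm_le m x htpos.ne'
    rw [← he] at hub
    set t : ℝ := ‖x + e‖ with ht
    have h1 : g x ≤ (((m:ℝ)+2) * t ^ (-((m:ℝ)+1)))^2 :=
      pow_le_pow_left₀ (norm_nonneg _) hub 2
    have h2 : (((m:ℝ)+2) * t ^ (-((m:ℝ)+1)))^2 = ((m:ℝ)+2)^2 * t ^ (-s) := by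
      rw [mul_pow]
      congr 1
      rw [← Real.rpow_natCast (t ^ (-((m:ℝ)+1))) 2, ← Real.rpow_mul htpos.le, hs]
      congr 1
      push_cast
      ring
    have h3 : t ^ (-s) ≤ 3 ^ s * (1 + t) ^ (-s) := by
      have h1t : (0:ℝ) < 1 + t := by linarith
      have h31 : 1 + t ≤ 3 * t := by linarith
      have h32 : (1+t) ^ s ≤ (3*t) ^ s :=
        Real.rpow_le_rpow h1t.le h31 hs_pos.le
      have h33 : ((3:ℝ)*t) ^ s = 3 ^ s * t ^ s := Real.mul_rpow (by norm_num) htpos.le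
      have hts : (0:ℝ) < t ^ s := Real.rpow_pos_of_pos htpos _
      have h1ts : (0:ℝ) < (1+t) ^ s := Real.rpow_pos_of_pos h1t _
      rw [Real.rpow_neg htpos.le, Real.rpow_neg h1t.le, ← div_eq_mul_inv, le_div_iff₀ h1ts]
      rw [h33] at h32
      calc (t ^ s)⁻¹ * (1+t) ^ s ≤ (t ^ s)⁻¹ * (3 ^ s * t ^ s) :=
            mul_le_mul_of_nonneg_left h32 (by positivity)
        _ = 3 ^ s := by field_simp
    calc g x ≤ ((m:ℝ)+2)^2 * t ^ (-s) := h2 ▸ h1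
      _ ≤ ((m:ℝ)+2)^2 * (3 ^ s * (1 + t) ^ (-s)) :=
          mul_le_mul_of_nonneg_left h3 (by positivity)
      _ = bound x := by rw [hbound, hC, ht]; ring
  -- uniformly for small h > 0, the rescaled domain avoids the ball around -e
  have avoid : ∀ h : ℝ, 0 < h → h < min ρ (δ/2) → ∀ x : (EuclideanSpace ℝ (Fin (m + 1))),
      x ∈ (fun x : (EuclideanSpace ℝ (Fin (m + 1))) => h • x) ⁻¹' Ω → (1:ℝ)/2 ≤ ‖x + e‖ := by
    intro h hh0 hhm x hxΩ
    by_contra hlt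
    push_neg at hlt
    have hhρ : h < ρ := lt_of_lt_of_le hhm (min_le_left _ _)
    have hhδ : h < δ/2 := lt_of_lt_of_le hhm (min_le_right _ _)
    set y : (EuclideanSpace ℝ (Fin (m + 1))) := x + e with hy
    have hyl : y (Fin.last m) = x (Fin.last m) + 1 := by
      simp [hy, he, PiLp.add_apply, EuclideanSpace.single_apply]
    have hxl : x (Fin.last m) < -(1/2 : ℝ) := by
      have h1 := coord_abs_le_norm y (Fin.last m)
      rw [hyl] at h1
      have h2 : |x (Fin.last m) + 1| < 1/2 := lt_of_le_of_lt h1 hlt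
      have h3 := (abs_lt.mp h2).2
      linarith [(abs_lt.mp h2).1]
    set x' : EuclideanSpace ℝ (Fin m) := WithLp.toLp 2 (fun i => x (Fin.castSucc i)) with hx'
    have hx'e : ∀ i, x' i = y (Fin.castSucc i) := by
      intro i
      have hne : Fin.castSucc i ≠ Fin.last m := (Fin.castSucc_lt_last i).ne
      simp [hx', hy, he, PiLp.add_apply, EuclideanSpace.single_apply, hne]
    have hx'n : ‖x'‖ < 1/2 := lt_of_le_of_lt (trunc_norm_le y x' hx'e) hlt
    have hxn : ‖x‖ < 3/2 := by
      have h1 : ‖e‖ = 1 := by rw [he, EuclideanSpace.norm_single]; norm_num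
      have h2 : y - e = x := by rw [hy]; abel
      have h3 : ‖x‖ ≤ ‖y‖ + ‖e‖ := h2 ▸ norm_sub_le y e
      rw [h1] at h3
      linarith
    have hmem : h • x ∈ Ω := hxΩ
    have hball2 : h • x ∈ Metric.ball (0:(EuclideanSpace ℝ (Fin (m + 1)))) δ := by
      rw [mem_ball_zero_iff, norm_smul, Real.norm_eq_abs, abs_of_pos hh0]
      nlinarith
    have h4 : h • x ∈ {z : (EuclideanSpace ℝ (Fin (m + 1))) |
        ψ (WithLp.toLp 2 (fun i => z (Fin.castSucc i)) : EuclideanSpace ℝ (Fin m)) < z (Fin.last m)} ∩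
        Metric.ball 0 δ := by
      rw [← hloc]; exact ⟨hmem, hball2⟩
    have harg : (WithLp.toLp 2 (fun i => (h • x) (Fin.castSucc i)) : EuclideanSpace ℝ (Fin m)) = h • x' := by
      ext i
      simp [hx', PiLp.smul_apply]
    have h5 : ψ (h • x') < h * x (Fin.last m) := by
      have h6 := h4.1
      simp only [Set.mem_setOf_eq] at h6
      rw [harg] at h6
      have h7 : (h • x) (Fin.last m) = h * x (Fin.last m) := by
        simp [PiLp.smul_apply]
      rwa [h7] at h6
    have h8 : ‖h • x'‖ < ρ := by
      rw [norm_smul, Real.norm_eq_abs, abs_of_pos hh0]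
      nlinarith
    have h9 : ‖ψ (h • x')‖ ≤ 1/4 * ‖h • x'‖ := hρ _ (by rwa [dist_zero_right])
    rw [Real.norm_eq_abs, norm_smul, Real.norm_eq_abs, abs_of_pos hh0] at h9
    have h10 := (abs_le.mp h9).1
    nlinarith
  -- apply dominated convergence
  apply tendsto_integral_filter_of_dominated_convergence bound
  · exact Filter.Eventually.of_forall fun h =>
      (hgmeas.indicator (hpre h)).aestronglyMeasurable
  · have hev1 : ∀ᶠ h in nhdsWithin (0:ℝ) (Set.Ioi 0), h < min ρ (δ/2) :=
      eventually_nhdsWithin_of_eventually_nhds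
        (Iio_mem_nhds (lt_min hρpos (by linarith)))
    have hev2 : ∀ᶠ h in nhdsWithin (0:ℝ) (Set.Ioi 0), h ∈ Set.Ioi (0:ℝ) :=
      self_mem_nhdsWithin
    filter_upwards [hev1, hev2] with h hh1 hh2
    apply Filter.Eventually.of_forall
    intro x
    by_cases hxΩ : x ∈ (fun x : (EuclideanSpace ℝ (Fin (m + 1))) => h • x) ⁻¹' Ω
    · rw [Set.indicator_of_mem hxΩ, Real.norm_eq_abs, abs_of_nonneg (hgnonneg x)]
      exact key_bound x (avoid h hh2 hh1 x hxΩ)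
    · rw [Set.indicator_of_notMem hxΩ, norm_zero]
      exact bound_nonneg x
  · exact bound_integrable
  · -- pointwise convergence a.e.
    have hzero : ∀ᵐ x : (EuclideanSpace ℝ (Fin (m + 1))), x (Fin.last m) ≠ 0 := by
      set K : Submodule ℝ (EuclideanSpace ℝ (Fin (m + 1))) :=
        LinearMap.ker ((EuclideanSpace.proj (Fin.last m) : (EuclideanSpace ℝ (Fin (m + 1))) →L[ℝ] ℝ) : (EuclideanSpace ℝ (Fin (m + 1))) →ₗ[ℝ] ℝ) with hK
      have hKne : K ≠ ⊤ := by
        intro htop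
        have h1 : e ∈ K := htop ▸ Submodule.mem_top
        rw [hK, LinearMap.mem_ker] at h1
        have h2 : (EuclideanSpace.proj (Fin.last m) : (EuclideanSpace ℝ (Fin (m + 1))) →L[ℝ] ℝ) e = 1 := by
          simp [he, PiLp.proj_apply, EuclideanSpace.single_apply]
        rw [ContinuousLinearMap.coe_coe, h2] at h1
        norm_num at h1
      have h0 := Measure.addHaar_submodule (volume : Measure (EuclideanSpace ℝ (Fin (m + 1)))) K hKne
      rw [ae_iff]
      convert h0 using 2
      ext x
      simp [hK, LinearMap.mem_ker, PiLp.proj_apply]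
    filter_upwards [hzero] with x hx
    set x' : EuclideanSpace ℝ (Fin m) := WithLp.toLp 2 (fun i => x (Fin.castSucc i)) with hx'
    -- slope of ψ along the ray h ↦ h • x'
    have hqd : HasDerivAt (fun h : ℝ => ψ (h • x')) 0 0 := by
      have h1 : HasDerivAt (fun h : ℝ => h • x') ((1:ℝ) • x') 0 :=
        (hasDerivAt_id (0:ℝ)).smul_const x'
      rw [one_smul] at h1
      have h2 : HasFDerivAt ψ (0 : EuclideanSpace ℝ (Fin m) →L[ℝ] ℝ) ((0:ℝ) • x') := by rwa [zero_smul]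
      have h3 := h2.comp_hasDerivAt 0 h1
      exact h3
    have hslope : Tendsto (fun h : ℝ => ψ (h • x') / h)
        (nhdsWithin (0:ℝ) (Set.Ioi 0)) (nhds 0) := by
      have h1 := hasDerivAt_iff_tendsto_slope.mp hqd
      have hsub : nhdsWithin (0:ℝ) (Set.Ioi 0) ≤ nhdsWithin (0:ℝ) {0}ᶜ :=
        nhdsWithin_mono 0 (fun z hz => ne_of_gt hz)
      refine ((h1.mono_left hsub).congr fun h => ?_)
      rw [slope_def_field]
      rw [show ψ ((0:ℝ) • x') = 0 by rw [zero_smul]; exact hψ0]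
      rw [sub_zero, sub_zero]
    have hevball : ∀ᶠ h in nhdsWithin (0:ℝ) (Set.Ioi 0), h * ‖x‖ < δ := by
      have h1 : Tendsto (fun h : ℝ => h * ‖x‖) (nhdsWithin (0:ℝ) (Set.Ioi 0)) (nhds 0) := by
        have h2 : Tendsto (fun h : ℝ => h * ‖x‖) (nhds 0) (nhds (0 * ‖x‖)) :=
          tendsto_id.mul_const ‖x‖
        rw [zero_mul] at h2
        exact h2.mono_left nhdsWithin_le_nhds
      exact h1.eventually_lt_const hδ
    have hevpos : ∀ᶠ h in nhdsWithin (0:ℝ) (Set.Ioi 0), h ∈ Set.Ioi (0:ℝ) :=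
      self_mem_nhdsWithin
    have harg : ∀ h : ℝ,
        (WithLp.toLp 2 (fun i => (h • x) (Fin.castSucc i)) : EuclideanSpace ℝ (Fin m)) = h • x' := by
      intro h
      ext i
      simp [hx', PiLp.smul_apply]
    have hlast : ∀ h : ℝ, (h • x) (Fin.last m) = h * x (Fin.last m) := by
      intro h
      simp [PiLp.smul_apply]
    rcases lt_or_gt_of_ne hx with hneg | hpos
    · -- x_n < 0 : eventually outside, both indicators vanish
      have hind : Set.indicator {z : (EuclideanSpace ℝ (Fin (m + 1))) | 0 < z (Fin.last m)} g x = 0 :=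
        Set.indicator_of_notMem (by simp only [Set.mem_setOf_eq]; linarith) g
      rw [hind]
      have hev := hslope.eventually_const_lt hneg
      refine Tendsto.congr' ?_ tendsto_const_nhds
      filter_upwards [hev, hevball, hevpos] with h h1 h2 h3
      have h3' : (0:ℝ) < h := h3
      have hnot : x ∉ (fun x : (EuclideanSpace ℝ (Fin (m + 1))) => h • x) ⁻¹' Ω := by
        intro hmem
        have hball2 : h • x ∈ Metric.ball (0:(EuclideanSpace ℝ (Fin (m + 1)))) δ := by
          rw [mem_ball_zero_iff, norm_smul, Real.norm_eq_abs, abs_of_pos h3']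
          exact h2
        have h4 : h • x ∈ Ω ∩ Metric.ball 0 δ := ⟨hmem, hball2⟩
        rw [hloc] at h4
        have h5 := h4.1
        simp only [Set.mem_setOf_eq] at h5
        rw [harg h, hlast h] at h5
        have h6 : x (Fin.last m) * h < ψ (h • x') := (lt_div_iff₀ h3').mp h1
        nlinarith
      exact (Set.indicator_of_notMem hnot g).symm
    · -- x_n > 0 : eventually inside, both indicators equal g x
      have hind : Set.indicator {z : (EuclideanSpace ℝ (Fin (m + 1))) | 0 < z (Fin.last m)} g x = g x :=
        Set.indicator_of_mem (by simpa only [Set.mem_setOf_eq] using hpos) g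
      rw [hind]
      have hev := hslope.eventually_lt_const hpos
      refine Tendsto.congr' ?_ tendsto_const_nhds
      filter_upwards [hev, hevball, hevpos] with h h1 h2 h3
      have h3' : (0:ℝ) < h := h3
      have hball2 : h • x ∈ Metric.ball (0:(EuclideanSpace ℝ (Fin (m + 1)))) δ := by
        rw [mem_ball_zero_iff, norm_smul, Real.norm_eq_abs, abs_of_pos h3']
        exact h2
      have h5 : ψ (h • x') < h * x (Fin.last m) := by
        have h6 := (div_lt_iff₀ h3').mp h1
        linarith [h6]
      have hmem : x ∈ (fun x : (EuclideanSpace ℝ (Fin (m + 1))) => h • x) ⁻¹' Ω := by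
        have h4 : h • x ∈ {z : (EuclideanSpace ℝ (Fin (m + 1))) |
            ψ (WithLp.toLp 2 (fun i => z (Fin.castSucc i)) : EuclideanSpace ℝ (Fin m)) < z (Fin.last m)} ∩
            Metric.ball 0 δ := by
          refine ⟨?_, hball2⟩
          simp only [Set.mem_setOf_eq]
          rw [harg h, hlast h]
          exact h5
        rw [← hloc] at h4
        exact h4.1
      exact (Set.indicator_of_mem hmem g).symm
end
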